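/- For real numbers α_i > -1, β > -1, natural numbers n ≥ 0, l_1, …, l_p ≤ n_j with L = l_1 + ⋯ + l_p ≤ N, and natural number N with L ≤ N, the following discrete summation evaluates in closed form by Chu–Vandermonde: ∑_{x=0}^{N} (x + α + 1)_n · Γ(x + α + 1)/(Γ(x+1) Γ(α+1)) · (β + N - x + 1) · Γ(β + N - x + 1)/(Γ(β+1) Γ(N-x+1)) · (-x)_L = (β+1)(α+1)_n (α+β+n+3)_N / N! · (-N)_L (α+n+1)_L / (α+β+n+3)_L. -/

import Mathlib

/-- The rising factorial (Pochhammer symbol): `(x)_0 = 1`, `(x)_{n+1} = (x)_n (x+n)`. -/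
def risingFactorial (x : ℝ) : ℕ → ℝ
  | 0 => 1
  | n + 1 => risingFactorial x n * (x + n)

@[simp] lemma rf_zero (x : ℝ) : risingFactorial x 0 = 1 := rfl

lemma rf_succ (x : ℝ) (n : ℕ) :
    risingFactorial x (n + 1) = risingFactorial x n * (x + n) := rfl

lemma rf_one (x : ℝ) : risingFactorial x 1 = x := by
  simp [rf_succ]

lemma rf_add (x : ℝ) (m k : ℕ) :
    risingFactorial x (m + k) = risingFactorial x m * risingFactorial (x + m) k := by
  induction k with
  | zero => simp
  | succ k ih =>
    rw [← add_assoc, rf_succ, ih, rf_succ]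
    push_cast
    ring

lemma rf_pos {x : ℝ} (hx : 0 < x) (k : ℕ) : 0 < risingFactorial x k := by
  induction k with
  | zero => norm_num
  | succ k ih =>
    rw [rf_succ]
    have h : (0:ℝ) ≤ (k:ℝ) := Nat.cast_nonneg k
    nlinarith

lemma gamma_rf {a : ℝ} (ha : 0 < a) (k : ℕ) :
    Real.Gamma (a + k) = risingFactorial a k * Real.Gamma a := by
  induction k with
  | zero => simp
  | succ k ih =>
    have h1 : a + ((k:ℕ)+1 : ℕ) = (a + k) + 1 := by push_cast; ring
    rw [h1, Real.Gamma_add_one (by positivity), ih, rf_succ]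
    ring

lemma rf_neg (x L : ℕ) :
    risingFactorial (-(x:ℝ)) L = (-1)^L * (x.descFactorial L : ℝ) := by
  induction L with
  | zero => simp
  | succ L ih =>
    rw [rf_succ, ih, Nat.descFactorial_succ]
    rcases lt_or_ge L x with h | h
    · rw [Nat.cast_mul, Nat.cast_sub h.le]
      ring
    · have hx : x - L = 0 := by omega
      rw [hx]
      rcases eq_or_lt_of_le h with h' | h'
      · subst h'
        simp
      · rw [Nat.descFactorial_of_lt h']
        simp

lemma rf_vandermonde (a b : ℝ) (M : ℕ) :
    ∑ y ∈ Finset.range (M+1),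
      (M.choose y : ℝ) * risingFactorial a y * risingFactorial b (M - y)
      = risingFactorial (a+b) M := by
  induction M with
  | zero => simp
  | succ M ih =>
    have e1 : ∑ y ∈ Finset.range (M+2),
        ((M+1).choose y : ℝ) * risingFactorial a y * risingFactorial b (M+1-y)
      = (∑ i ∈ Finset.range (M+1),
          ((M.choose (i+1) : ℝ) * risingFactorial a (i+1) * risingFactorial b (M-i)
           + (M.choose i : ℝ) * (risingFactorial a i * (a + i)) * risingFactorial b (M-i)))
        + risingFactorial b (M+1) := by
      rw [Finset.sum_range_succ']
      congr 1
      · apply Finset.sum_congr rfl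
        intro i hi
        rw [Nat.choose_succ_succ, show M + 1 - (i+1) = M - i from by omega, ← rf_succ]
        push_cast
        ring
      · simp
    have e2 : (∑ i ∈ Finset.range (M+1),
          (M.choose (i+1) : ℝ) * risingFactorial a (i+1) * risingFactorial b (M-i))
        + risingFactorial b (M+1)
      = ∑ y ∈ Finset.range (M+1),
          (M.choose y : ℝ) * risingFactorial a y * risingFactorial b (M+1-y) := by
      rw [Finset.sum_range_succ, Nat.choose_succ_self]
      rw [Finset.sum_range_succ' (fun y => (M.choose y : ℝ) * risingFactorial a y
            * risingFactorial b (M+1-y)) M]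
      simp only [Nat.cast_zero, zero_mul, add_zero, Nat.choose_zero_right, Nat.cast_one,
        one_mul, rf_zero, Nat.sub_zero]
      congr 1
      apply Finset.sum_congr rfl
      intro i hi
      rw [show M + 1 - (i+1) = M - i from by omega]
    rw [e1, Finset.sum_add_distrib, add_right_comm, e2]
    have e3 : ∑ y ∈ Finset.range (M+1),
          (M.choose y : ℝ) * risingFactorial a y * risingFactorial b (M+1-y)
        = ∑ y ∈ Finset.range (M+1),
          (M.choose y : ℝ) * risingFactorial a y * risingFactorial b (M-y)
            * (b + ((M:ℝ) - y)) := by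
      apply Finset.sum_congr rfl
      intro y hy
      have hyM : y ≤ M := by simpa [Nat.lt_succ_iff] using hy
      rw [show M + 1 - y = (M - y) + 1 from by omega, rf_succ, Nat.cast_sub hyM]
      ring
    have e4 : ∑ i ∈ Finset.range (M+1),
          (M.choose i : ℝ) * (risingFactorial a i * (a + i)) * risingFactorial b (M-i)
        = ∑ i ∈ Finset.range (M+1),
          (M.choose i : ℝ) * risingFactorial a i * risingFactorial b (M-i)
            * (a + (i:ℝ)) := by
      apply Finset.sum_congr rfl
      intro i _
      ring
    rw [e3, e4, ← Finset.sum_add_distrib]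
    have e5 : ∑ y ∈ Finset.range (M+1),
        ((M.choose y : ℝ) * risingFactorial a y * risingFactorial b (M-y) * (b + ((M:ℝ) - y))
         + (M.choose y : ℝ) * risingFactorial a y * risingFactorial b (M-y) * (a + (y:ℝ)))
        = (∑ y ∈ Finset.range (M+1),
            (M.choose y : ℝ) * risingFactorial a y * risingFactorial b (M-y)) * (a + b + M) := by
      rw [Finset.sum_mul]
      apply Finset.sum_congr rfl
      intro y _
      ring
    rw [e5, ih, rf_succ]

/-- Closed form evaluation of the discrete integral of Hahn weights by Chu–Vandermonde. -/
theorem hahn_discrete_integral (α β : ℝ) (hα : -1 < α) (hβ : -1 < β)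
    (n L N : ℕ) (hLN : L ≤ N) :
    ∑ x ∈ Finset.range (N + 1),
        risingFactorial ((x : ℝ) + α + 1) n *
          (Real.Gamma ((x : ℝ) + α + 1) / (Real.Gamma ((x : ℝ) + 1) * Real.Gamma (α + 1))) *
          ((β + (N : ℝ) - x + 1) *
            (Real.Gamma (β + (N : ℝ) - x + 1) /
              (Real.Gamma (β + 1) * Real.Gamma ((N : ℝ) - x + 1)))) *
          risingFactorial (-(x : ℝ)) L
      = (β + 1) * risingFactorial (α + 1) n * risingFactorial (α + β + n + 3) N /
          (N.factorial : ℝ) *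
          (risingFactorial (-(N : ℝ)) L * risingFactorial (α + (n : ℝ) + 1) L /
            risingFactorial (α + β + n + 3) L) := by
  have hα1 : (0:ℝ) < α + 1 := by linarith
  have hβ1 : (0:ℝ) < β + 1 := by linarith
  have hΓα : Real.Gamma (α+1) ≠ 0 := (Real.Gamma_pos_of_pos hα1).ne'
  have hΓβ : Real.Gamma (β+1) ≠ 0 := (Real.Gamma_pos_of_pos hβ1).ne'
  set M := N - L with hMdef
  have hNM : N = L + M := by omega
  set a : ℝ := α + 1 + ((L + n : ℕ) : ℝ) with ha
  set b : ℝ := β + 2 with hb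
  set K : ℝ := (-1)^L * risingFactorial (α+1) (L+n) * (β+1) / (M.factorial : ℝ) with hK
  have step1 : ∀ x ∈ Finset.range (N+1),
      risingFactorial ((x : ℝ) + α + 1) n *
          (Real.Gamma ((x : ℝ) + α + 1) / (Real.Gamma ((x : ℝ) + 1) * Real.Gamma (α + 1))) *
          ((β + (N : ℝ) - x + 1) *
            (Real.Gamma (β + (N : ℝ) - x + 1) /
              (Real.Gamma (β + 1) * Real.Gamma ((N : ℝ) - x + 1)))) *
          risingFactorial (-(x : ℝ)) L
      = (-1:ℝ)^L * risingFactorial (α+1) (x+n) * risingFactorial (β+1) (N-x+1)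
          * (x.descFactorial L : ℝ) / ((x.factorial : ℝ) * ((N-x).factorial : ℝ)) := by
    intro x hx
    have hxN : x ≤ N := by simpa [Nat.lt_succ_iff] using hx
    have hNx : ((N - x : ℕ) : ℝ) = (N:ℝ) - x := by rw [Nat.cast_sub hxN]
    have e1 : Real.Gamma ((x:ℝ) + α + 1) = risingFactorial (α+1) x * Real.Gamma (α+1) := by
      rw [show (x:ℝ) + α + 1 = (α+1) + (x:ℕ) from by push_cast; ring]
      exact gamma_rf hα1 x
    have e2 : Real.Gamma ((x:ℝ) + 1) = (x.factorial : ℝ) := Real.Gamma_nat_eq_factorial x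
    have e3 : Real.Gamma ((N:ℝ) - x + 1) = ((N - x).factorial : ℝ) := by
      rw [← hNx]; exact Real.Gamma_nat_eq_factorial _
    have e4 : Real.Gamma (β + (N:ℝ) - x + 1)
        = risingFactorial (β+1) (N - x) * Real.Gamma (β+1) := by
      rw [show β + (N:ℝ) - x + 1 = (β+1) + ((N - x : ℕ):ℝ) from by rw [hNx]; ring]
      exact gamma_rf hβ1 (N - x)
    have e6 : risingFactorial (α+1) (x + n)
        = risingFactorial (α+1) x * risingFactorial ((x:ℝ) + α + 1) n := by
      rw [rf_add (α+1) x n, show α + 1 + ((x:ℕ):ℝ) = (x:ℝ) + α + 1 from by ring]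
    have e7 : risingFactorial (β+1) (N - x + 1)
        = risingFactorial (β+1) (N-x) * (β + (N:ℝ) - x + 1) := by
      rw [rf_succ, hNx]; ring
    have f1 : (x.factorial : ℝ) ≠ 0 := Nat.cast_ne_zero.mpr (Nat.factorial_ne_zero _)
    have f2 : ((N-x).factorial : ℝ) ≠ 0 := Nat.cast_ne_zero.mpr (Nat.factorial_ne_zero _)
    rw [e1, e2, e3, e4, rf_neg x L, e6, e7]
    field_simp
  rw [Finset.sum_congr rfl step1]
  have step2 : ∑ x ∈ Finset.range (N+1),
      (-1:ℝ)^L * risingFactorial (α+1) (x+n) * risingFactorial (β+1) (N-x+1)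
        * (x.descFactorial L : ℝ) / ((x.factorial : ℝ) * ((N-x).factorial : ℝ))
      = ∑ y ∈ Finset.range (M+1),
      (-1:ℝ)^L * risingFactorial (α+1) ((L+y)+n) * risingFactorial (β+1) (N-(L+y)+1)
        * ((L+y).descFactorial L : ℝ)
        / (((L+y).factorial : ℝ) * ((N-(L+y)).factorial : ℝ)) := by
    rw [Finset.range_eq_Ico, ← Finset.sum_Ico_consecutive _ (Nat.zero_le L)
      (by omega : L ≤ N+1)]
    have h0 : ∑ x ∈ Finset.Ico 0 L,
        (-1:ℝ)^L * risingFactorial (α+1) (x+n) * risingFactorial (β+1) (N-x+1)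
          * (x.descFactorial L : ℝ) / ((x.factorial : ℝ) * ((N-x).factorial : ℝ)) = 0 := by
      apply Finset.sum_eq_zero
      intro x hx
      rw [Nat.descFactorial_of_lt (Finset.mem_Ico.mp hx).2]
      simp
    rw [h0, zero_add, Finset.sum_Ico_eq_sum_range,
      show N + 1 - L = M + 1 from by omega, Finset.range_eq_Ico]
  rw [step2]
  have step3 : ∀ y ∈ Finset.range (M+1),
      (-1:ℝ)^L * risingFactorial (α+1) ((L+y)+n) * risingFactorial (β+1) (N-(L+y)+1)
        * ((L+y).descFactorial L : ℝ)
        / (((L+y).factorial : ℝ) * ((N-(L+y)).factorial : ℝ))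
      = K * ((M.choose y : ℝ) * risingFactorial a y * risingFactorial b (M - y)) := by
    intro y hy
    have hyM : y ≤ M := by simpa [Nat.lt_succ_iff] using hy
    have h1 : (L+y)+n = (L+n)+y := by omega
    have h2 : N - (L+y) = M - y := by omega
    have h2' : N - (L+y) + 1 = (M-y) + 1 := by omega
    have h3 : risingFactorial (α+1) ((L+n)+y)
        = risingFactorial (α+1) (L+n) * risingFactorial a y := by
      rw [rf_add, ha]
    have h4 : risingFactorial (β+1) ((M-y)+1)
        = (β+1) * risingFactorial b (M-y) := by
      rw [show (M-y)+1 = 1+(M-y) from by omega, rf_add, rf_one]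
      rw [show (β+1) + ((1:ℕ):ℝ) = b from by rw [hb]; push_cast; ring]
    have hnat : (L+y).descFactorial L * M.factorial
        = M.choose y * (L+y).factorial * (M-y).factorial := by
      have hd : y.factorial * (L+y).descFactorial L = (L+y).factorial := by
        have h := Nat.factorial_mul_descFactorial (show L ≤ L + y from by omega)
        rwa [show L + y - L = y from by omega] at h
      have hc := Nat.choose_mul_factorial_mul_factorial hyM
      calc (L+y).descFactorial L * M.factorial
          = (L+y).descFactorial L * (M.choose y * y.factorial * (M-y).factorial) := by
            rw [hc]
        _ = M.choose y * (y.factorial * (L+y).descFactorial L) * (M-y).factorial := by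
            ring
        _ = _ := by rw [hd]
    have f1 : ((L+y).factorial : ℝ) ≠ 0 := Nat.cast_ne_zero.mpr (Nat.factorial_ne_zero _)
    have f2 : ((M-y).factorial : ℝ) ≠ 0 := Nat.cast_ne_zero.mpr (Nat.factorial_ne_zero _)
    have f3 : ((M).factorial : ℝ) ≠ 0 := Nat.cast_ne_zero.mpr (Nat.factorial_ne_zero _)
    have key : (((L+y).descFactorial L : ℕ) : ℝ)
          / (((L+y).factorial : ℝ) * ((M-y).factorial : ℝ))
        = (M.choose y : ℝ) / (M.factorial : ℝ) := by
      rw [div_eq_div_iff (mul_ne_zero f1 f2) f3]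
      exact_mod_cast congrArg (Nat.cast (R := ℝ))
        (by rw [hnat]; ring : (L+y).descFactorial L * M.factorial
          = M.choose y * ((L+y).factorial * (M-y).factorial))
    calc (-1:ℝ)^L * risingFactorial (α+1) ((L+y)+n) * risingFactorial (β+1) (N-(L+y)+1)
          * ((L+y).descFactorial L : ℝ)
          / (((L+y).factorial : ℝ) * ((N-(L+y)).factorial : ℝ))
        = ((-1:ℝ)^L * risingFactorial (α+1) (L+n) * (β+1)
            * (risingFactorial a y * risingFactorial b (M-y)))
          * (((L+y).descFactorial L : ℝ)
            / (((L+y).factorial : ℝ) * ((M-y).factorial : ℝ))) := by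
          rw [h1, h2', h2, h3, h4]; ring
      _ = ((-1:ℝ)^L * risingFactorial (α+1) (L+n) * (β+1)
            * (risingFactorial a y * risingFactorial b (M-y)))
          * ((M.choose y : ℝ) / (M.factorial : ℝ)) := by rw [key]
      _ = K * ((M.choose y : ℝ) * risingFactorial a y * risingFactorial b (M - y)) := by
          rw [hK]; ring
  rw [Finset.sum_congr rfl step3, ← Finset.mul_sum, rf_vandermonde]
  -- final algebra
  have hab : (α+β+(n:ℝ)+3) + ((L:ℕ):ℝ) = a + b := by rw [ha, hb]; push_cast; ring
  have hc0 : (0:ℝ) < α+β+(n:ℝ)+3 := by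
    have hn0 : (0:ℝ) ≤ (n:ℝ) := Nat.cast_nonneg n
    linarith
  have hRFc : risingFactorial (α+β+(n:ℝ)+3) L ≠ 0 := (rf_pos hc0 L).ne'
  have hN : risingFactorial (α+β+(n:ℝ)+3) N
      = risingFactorial (α+β+(n:ℝ)+3) L * risingFactorial (a+b) M := by
    rw [← hab, ← rf_add, ← hNM]
  have hnL : risingFactorial (α+1) n * risingFactorial (α+(n:ℝ)+1) L
      = risingFactorial (α+1) (L+n) := by
    rw [show L+n = n+L from by omega, rf_add,
      show α+1+((n:ℕ):ℝ) = α+(n:ℝ)+1 from by ring]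
  have hdN : (N.factorial : ℝ) = (N.descFactorial L : ℝ) * (M.factorial : ℝ) := by
    have h := Nat.factorial_mul_descFactorial hLN
    exact_mod_cast (by rw [← h]; ring :
      N.factorial = N.descFactorial L * (N-L).factorial)
  have fdN : (N.descFactorial L : ℝ) ≠ 0 := by
    rw [Nat.cast_ne_zero]
    intro h
    exact absurd (Nat.descFactorial_eq_zero_iff_lt.mp h) (by omega)
  have fM : ((M).factorial : ℝ) ≠ 0 := Nat.cast_ne_zero.mpr (Nat.factorial_ne_zero _)
  rw [rf_neg N L, hK, ← hnL, hN, hdN]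
  field_simp
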